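/- arXiv:2402.06705 — 3 statements merged into one kernel-verified Lean document; each statement's English description precedes it below -/
import Mathlib

section
/- Let G be a finite group, N ⊴ G, K ≤ G a subgroup with |G : K| a π-number, and let T ≤ K ∩ N be the subgroup generated by all elements z of K ∩ N whose G-class size |z^G| is a π'-number. Then T is normal in G. -/
def classSet {G : Type*} [Group G] (x : G) : Set G := {y | IsConj x y}

noncomputable def classSize {G : Type*} [Group G] (x : G) : ℕ := Nat.card (classSet x)

def IsPiNumber (π : Set ℕ) (n : ℕ) : Prop := ∀ p : ℕ, p.Prime → p ∣ n → p ∈ π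

/-!
The generating set is closed under conjugation. Conjugation preserves `N` and class sizes; for
`K`, take a generator `z`. Since `|z^G| = |G : C_G(z)|` is a `π'`-number and `|G : K|` is a
`π`-number, the two indices are coprime, which forces `G = K C_G(z)`. Hence every `G`-conjugate
of `z` is already a `K`-conjugate, and lies in `K`.
-/

theorem IsPiNumber.coprime_of_compl {π : Set ℕ} {a b : ℕ} (ha : IsPiNumber π a)
    (hb : IsPiNumber πᶜ b) : a.Coprime b :=
  Nat.coprime_of_dvd fun p hp hpa hpb => hb p hp hpb (ha p hp hpa)

section

variable {G : Type*} [Group G]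

theorem classSize_conj (g z : G) : classSize (g * z * g⁻¹) = classSize z :=
  congrArg (fun s : Set G => Nat.card s) (isConj_iff.mpr ⟨g, rfl⟩).conjugatesOf_eq.symm

theorem classSize_eq_index_centralizer (z : G) :
    classSize z = (Subgroup.centralizer {z}).index := by
  have horbit : classSet z = MulAction.orbit (ConjAct G) z := by
    ext y
    rw [ConjAct.mem_orbit_conjAct, isConj_comm]
    rfl
  rw [classSize, horbit, Nat.card_coe_set_eq, ← MulAction.index_stabilizer,
    ConjAct.stabilizer_eq_centralizer]
  rfl

namespace Subgroup

theorem index_dvd_relIndex_of_coprime {C K : Subgroup G} (h : C.index.Coprime K.index) :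
    C.index ∣ C.relIndex K := by
  have hmul : C.relIndex K * K.index = (C ⊓ K).index := by
    rw [← inf_relIndex_right]
    exact relIndex_mul_index inf_le_right
  exact h.dvd_of_dvd_mul_right (hmul ▸ index_dvd_of_le inf_le_left)

theorem exists_mul_eq_of_coprime_index {C K : Subgroup G} (h : C.index.Coprime K.index) (g : G) :
    ∃ k ∈ K, ∃ c ∈ C, k * c = g := by
  rcases eq_or_ne C.index 0 with hC | hC
  · obtain rfl : K = ⊤ := index_eq_one.mp (Nat.coprime_zero_left _ |>.mp (hC ▸ h))
    exact ⟨g, mem_top g, 1, one_mem C, mul_one g⟩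
  -- `K ⧸ (C ⊓ K)` embeds into `G ⧸ C` and is at least as large, so every coset `g C` meets `K`.
  let f := quotientSubgroupOfEmbeddingOfLE C (le_top : K ≤ ⊤)
  have hcard : Nat.card ((⊤ : Subgroup G) ⧸ C.subgroupOf ⊤) = C.index := relIndex_top_right C
  have : Finite ((⊤ : Subgroup G) ⧸ C.subgroupOf ⊤) := Nat.finite_of_card_ne_zero (hcard ▸ hC)
  have hle : Nat.card ((⊤ : Subgroup G) ⧸ C.subgroupOf ⊤) ≤ C.relIndex K :=
    hcard ▸ Nat.le_of_dvd (Nat.pos_of_ne_zero (mt index_eq_zero_of_relIndex_eq_zero hC))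
      (index_dvd_relIndex_of_coprime h)
  obtain ⟨q, hq⟩ :=
    (f.injective.bijective_of_nat_card_le hle).2 (⟨g, mem_top g⟩ : (⊤ : Subgroup G))
  induction q using QuotientGroup.induction_on with | H k => ?_
  rw [quotientSubgroupOfEmbeddingOfLE_apply_mk, QuotientGroup.eq, mem_subgroupOf] at hq
  exact ⟨k, k.2, _, hq, mul_inv_cancel_left _ _⟩

theorem conj_mem_of_coprime_index_centralizer {K : Subgroup G} {z : G} (hz : z ∈ K)
    (h : (centralizer {z}).index.Coprime K.index) (g : G) : g * z * g⁻¹ ∈ K := by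
  obtain ⟨k, hk, c, hc, rfl⟩ := exists_mul_eq_of_coprime_index h g
  have hcz : c * z * c⁻¹ = z := by rw [mem_centralizer_singleton_iff.mp hc, mul_inv_cancel_right]
  have hconj : k * c * z * (k * c)⁻¹ = k * z * k⁻¹ := by
    calc k * c * z * (k * c)⁻¹ = k * (c * z * c⁻¹) * k⁻¹ := by group
      _ = k * z * k⁻¹ := by rw [hcz]
  rw [hconj]
  exact K.mul_mem (K.mul_mem hk hz) (K.inv_mem hk)

theorem closure_normal_of_conj_mem {s : Set G} (h : ∀ g, ∀ x ∈ s, g * x * g⁻¹ ∈ s) :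
    (closure s).Normal where
  conj_mem n hn g := by
    have hmap : (closure s).map (MulAut.conj g).toMonoidHom ≤ closure s := by
      rw [MonoidHom.map_closure]
      exact closure_mono (Set.image_subset_iff.mpr fun x hx => h g x hx)
    exact hmap ⟨n, hn, rfl⟩

end Subgroup

end

theorem stmt15_general {G : Type*} [Group G] (N : Subgroup G) (hN : N.Normal)
    (K : Subgroup G) (π : Set ℕ) (hK : IsPiNumber π K.index)
    (T : Subgroup G)
    (hT : T = Subgroup.closure {z : G | z ∈ K ⊓ N ∧ IsPiNumber πᶜ (classSize z)}) :
    T.Normal := by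
  subst hT
  refine Subgroup.closure_normal_of_conj_mem fun g z ⟨⟨hzK, hzN⟩, hz⟩ =>
    ⟨⟨?_, hN.conj_mem z hzN g⟩, (classSize_conj g z).symm ▸ hz⟩
  rw [classSize_eq_index_centralizer] at hz
  exact Subgroup.conj_mem_of_coprime_index_centralizer hzK (hK.coprime_of_compl hz).symm g

theorem stmt15 {G : Type*} [Group G] [Finite G] (N : Subgroup G) (hN : N.Normal)
    (K : Subgroup G) (π : Set ℕ) (hK : IsPiNumber π K.index)
    (T : Subgroup G)
    (hT : T = Subgroup.closure {z : G | z ∈ K ⊓ N ∧ IsPiNumber πᶜ (classSize z)}) :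
    T.Normal :=
  stmt15_general N hN K π hK T hT
end

section
/- Let N = M × D be a finite group with Z(N) = 1, let s be a prime dividing |M|, and suppose the conjugacy class size in M of every s'-element of M is an s'-number. Then this leads to a contradiction; i.e., if Z(N) = 1 and M is a nontrivial direct factor, then M cannot have the property that every s'-element has s'-class size for a prime s dividing |M| (since then a Sylow s-subgroup S of M would be a direct factor of M with Z(S) ≤ Z(N) = 1, impossible). -/
/-!
Let `S` be a Sylow `s`-subgroup of `M`. Write `g ∈ M` as `g = u * v` with `u` an `s`-element and
`v` an `s'`-element, both powers of `g`. The centralizer of `v` has `s'`-index, hence contains a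
Sylow subgroup of `M` through `u`; conjugating it onto `S` shows that every element of `M` is
conjugate into `S * C_M(S)`, i.e. into the centralizer of any `z ∈ Z(S)`. Since a finite group is
not the union of the conjugates of a proper subgroup, `Z(S) ≤ Z(M)`. But `Z(S) ≠ 1` because
`s ∣ |M|`, whereas `Z(M) ≤ Z(M × D) = 1`.
-/

open Subgroup

lemma classSize_eq_index_centralizer_s17 {G : Type*} [Group G] (x : G) :
    classSize x = (centralizer {x}).index := by
  have horbit : classSet x = MulAction.orbit (ConjAct G) x := by
    ext y
    rw [ConjAct.mem_orbit_conjAct, isConj_comm]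
    rfl
  rw [classSize, horbit, Nat.card_coe_set_eq, ← MulAction.index_stabilizer,
    centralizer_eq_comap_stabilizer]
  exact (index_comap_of_surjective _ (MulEquiv.surjective _)).symm

lemma Nat.card_subtype_ne {α : Type*} [Finite α] (a : α) :
    Nat.card {x // x ≠ a} = Nat.card α - 1 := by
  classical
  have := Fintype.ofFinite α
  simp only [ne_eq, Nat.card_eq_fintype_card, Fintype.card_subtype_compl, Fintype.card_unique]

lemma Subgroup.eq_top_of_forall_exists_conj_mem {G : Type*} [Group G] [Finite G] (H : Subgroup G)
    (h : ∀ g : G, ∃ c : G, c * g * c⁻¹ ∈ H) : H = ⊤ := by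
  -- Each conjugate of `H` is `q.out * H * q.out⁻¹` for a coset `q`, and they all contain `1`,
  -- so covering `G` forces `|G| - 1 ≤ [G : H] * (|H| - 1)`.
  let f : (G ⧸ H) × {k : H // k ≠ 1} → {g : G // g ≠ 1} := fun x =>
    ⟨x.1.out * x.2.1 * x.1.out⁻¹, by simpa [conj_eq_one_iff] using x.2.2⟩
  have hf : Function.Surjective f := by
    rintro ⟨g, hg⟩
    obtain ⟨c, hc⟩ := h g
    obtain ⟨k, hk⟩ := QuotientGroup.mk_out_eq_mul H c⁻¹
    refine ⟨((c⁻¹ : G), ⟨⟨k⁻¹ * (c * g * c⁻¹) * k, ?_⟩, ?_⟩), Subtype.ext ?_⟩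
    · exact mul_mem (mul_mem (inv_mem k.2) hc) k.2
    · simpa [Subtype.ext_iff] using
        (conj_eq_one_iff (a := (k : G)⁻¹)).not.mpr (conj_eq_one_iff.not.mpr hg)
    · simp only [f, hk, Subgroup.coe_inv]
      group
  have hcard := Nat.card_le_card_of_surjective f hf
  rw [Nat.card_prod, ← index_eq_card, Nat.card_subtype_ne, Nat.card_subtype_ne,
    ← H.card_mul_index, Nat.mul_sub_one] at hcard
  have hi : H.index ≠ 0 := index_ne_zero_of_finite
  have hle : H.index ≤ H.index * Nat.card H := Nat.le_mul_of_pos_right _ Nat.card_pos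
  rw [mul_comm (Nat.card H)] at hcard
  generalize H.index * Nat.card H = n at hcard hle
  exact index_eq_one.mp (by omega)

lemma IsOfFinOrder.exists_commute_mul_eq_isPGroup {G : Type*} [Group G] {s : ℕ} (hs : s.Prime)
    {g : G} (hg : IsOfFinOrder g) :
    ∃ u v : G, Commute u v ∧ u * v = g ∧ IsPGroup s (zpowers u) ∧ ¬ s ∣ orderOf v := by
  have hn : orderOf g ≠ 0 := hg.orderOf_pos.ne'
  set a := s ^ (orderOf g).factorization s
  set b := ordCompl[s] (orderOf g)
  have hab : (a * b : ℤ) = orderOf g := mod_cast Nat.ordProj_mul_ordCompl_eq_self _ s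
  have hbezout : (1 : ℤ) = a * a.gcdA b + b * a.gcdB b := by
    rw [← Nat.gcd_eq_gcd_ab, (Nat.coprime_ordCompl hs hn).pow_left _, Nat.cast_one]
  have hg_pow : ∀ k : ℤ, g ^ ((orderOf g : ℤ) * k) = 1 := fun k => by
    rw [zpow_mul, zpow_natCast, pow_orderOf_eq_one, one_zpow]
  set u := g ^ (b * a.gcdB b : ℤ)
  set v := g ^ (a * a.gcdA b : ℤ)
  have hu : orderOf u ∣ a := orderOf_dvd_of_pow_eq_one <| by
    rw [← zpow_natCast, ← zpow_mul, ← hg_pow (a.gcdB b), ← hab]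
    ring_nf
  have hv : orderOf v ∣ b := orderOf_dvd_of_pow_eq_one <| by
    rw [← zpow_natCast, ← zpow_mul, ← hg_pow (a.gcdA b), ← hab]
    ring_nf
  obtain ⟨j, -, hj⟩ := (Nat.dvd_prime_pow hs).1 hu
  refine ⟨u, v, (Commute.refl g).zpow_zpow _ _, ?_, IsPGroup.of_card (Nat.card_zpowers u ▸ hj),
    fun hsv => Nat.not_dvd_ordCompl hs hn (hsv.trans hv)⟩
  rw [← zpow_add, add_comm, ← hbezout, zpow_one]

lemma IsPGroup.exists_le_sylow_le_of_not_dvd_index {G : Type*} [Group G] [Finite G] {s : ℕ}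
    [Fact s.Prime] {P C : Subgroup G} (hP : IsPGroup s P) (hPC : P ≤ C) (hC : ¬ s ∣ C.index) :
    ∃ T : Sylow s G, P ≤ T ∧ (T : Subgroup G) ≤ C := by
  obtain ⟨Q, hPQ⟩ := (hP.comap_subtype (K := C)).exists_le_sylow
  have hQ : IsPGroup s (Q.map C.subtype) := Q.isPGroup'.map _
  have hQ_index : ¬ s ∣ (Q.map C.subtype).index := by
    rw [index_map_subtype, (Fact.out : s.Prime).dvd_mul]
    exact not_or.2 ⟨Q.not_dvd_index, hC⟩
  refine ⟨hQ.toSylow hQ_index, ?_, map_subtype_le _⟩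
  calc P = (P.subgroupOf C).map C.subtype := by rw [subgroupOf_map_subtype, inf_of_le_left hPC]
    _ ≤ Q.map C.subtype := map_mono hPQ

lemma Sylow.exists_conj_eq_mul_mem_centralizer {G : Type*} [Group G] [Finite G] {s : ℕ}
    [Fact s.Prime] (h : ∀ v : G, ¬ s ∣ orderOf v → ¬ s ∣ classSize v) (S : Sylow s G) (g : G) :
    ∃ c : G, ∃ a ∈ (S : Subgroup G), ∃ b ∈ centralizer (S : Set G), c * g * c⁻¹ = a * b := by
  obtain ⟨u, v, huv, rfl, hu, hv⟩ :=
    (isOfFinOrder_of_finite g).exists_commute_mul_eq_isPGroup (Fact.out : s.Prime)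
  have hC : ¬ s ∣ (centralizer {v}).index := classSize_eq_index_centralizer_s17 v ▸ h v hv
  have huC : zpowers u ≤ centralizer {v} := zpowers_le.2 (mem_centralizer_singleton_iff.2 huv.eq)
  obtain ⟨T, huT, hTv⟩ := hu.exists_le_sylow_le_of_not_dvd_index huC hC
  obtain ⟨c, rfl⟩ := MulAction.exists_smul_eq G T S
  refine ⟨c, c * u * c⁻¹, ?_, c * v * c⁻¹, ?_, by group⟩
  · rw [Sylow.coe_subgroup_smul]
    exact smul_mem_pointwise_smul _ (MulAut.conj c) _ (huT (mem_zpowers u))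
  · rw [mem_centralizer_iff]
    intro w hw
    rw [Sylow.coe_smul, Set.mem_smul_set_iff_inv_smul_mem] at hw
    have hvw : c⁻¹ * w * c * v = v * (c⁻¹ * w * c) := by
      simpa [MulAut.smul_def] using mem_centralizer_singleton_iff.1 (hTv hw)
    calc w * (c * v * c⁻¹) = c * (c⁻¹ * w * c * v) * c⁻¹ := by group
      _ = c * (v * (c⁻¹ * w * c)) * c⁻¹ := by rw [hvw]
      _ = c * v * c⁻¹ * w := by group

lemma Sylow.mem_center_of_mem_centralizer {G : Type*} [Group G] [Finite G] {s : ℕ}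
    [Fact s.Prime] (h : ∀ v : G, ¬ s ∣ orderOf v → ¬ s ∣ classSize v) (S : Sylow s G) {z : G}
    (hzS : z ∈ S) (hz : z ∈ centralizer (S : Set G)) : z ∈ center G := by
  have htop : centralizer {z} = ⊤ := eq_top_of_forall_exists_conj_mem _ fun g => by
    obtain ⟨c, a, ha, b, hb, hcg⟩ := S.exists_conj_eq_mul_mem_centralizer h g
    exact ⟨c, hcg ▸ mul_mem (mem_centralizer_singleton_iff.2 (hz a ha))
      (mem_centralizer_singleton_iff.2 (hb z hzS).symm)⟩
  refine mem_center_iff.2 fun g => ?_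
  have hg : g ∈ centralizer {z} := htop ▸ mem_top g
  exact mem_centralizer_singleton_iff.1 hg

theorem stmt17_general {M D : Type*} [Group M] [Group D] [Finite M]
    (hZ : Subgroup.center (M × D) = ⊥)
    (s : ℕ) (hs : s.Prime) (hsd : s ∣ Nat.card M)
    (h : ∀ m : M, ¬ s ∣ orderOf m → ¬ s ∣ classSize m) :
    False := by
  have : Fact s.Prime := ⟨hs⟩
  have hZM : center M = ⊥ := (prod_eq_bot_iff.1 (Subgroup.center_prod (G := M) (H := D) ▸ hZ)).1
  obtain ⟨S⟩ : Nonempty (Sylow s M) := inferInstance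
  have : Nontrivial S := (nontrivial_iff_ne_bot _).2 (S.ne_bot_of_dvd_card hsd)
  have := S.isPGroup'.center_nontrivial
  obtain ⟨z, hz⟩ := exists_ne (1 : center S)
  have hz_center : (z : M) ∈ center M := S.mem_center_of_mem_centralizer h z.1.2
    fun w hw => congrArg Subtype.val (mem_center_iff.1 z.2 ⟨w, hw⟩)
  rw [hZM, mem_bot] at hz_center
  exact hz (Subtype.ext (Subtype.ext hz_center))

theorem stmt17 {M D : Type*} [Group M] [Group D] [Finite M] [Finite D]
    (hZ : Subgroup.center (M × D) = ⊥)
    (s : ℕ) (hs : s.Prime) (hsd : s ∣ Nat.card M)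
    (h : ∀ m : M, ¬ s ∣ orderOf m → ¬ s ∣ classSize m) :
    False :=
  stmt17_general hZ s hs hsd h
end

section
/- Let G be a finite group, N ⊴ G, and x, y ∈ N with gcd(|x^G|,|y^G|) = 1, d(x^G, y^G) ≥ 3 in Γ_G(N), and |x^G| > |y^G|. If x and y are commuting p-elements and z = y^g ≠ y for some g ∈ G, then w = z·y^{-1} is a nontrivial p-element commuting with y, and p divides |x^G|. -/
open Pointwise

/-- The graph `Γ_G(N)` on the noncentral elements of `N` (each `G`-class blown up to a
clique of mutually conjugate elements, which does not affect distances between distinct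
classes nor connectedness): two vertices are adjacent iff their `G`-class sizes are not
coprime. -/
noncomputable def classGraph (G : Type*) [Group G] (N : Subgroup G) :
    SimpleGraph {x : G // x ∈ N ∧ x ∉ Subgroup.center G} where
  Adj a b := a ≠ b ∧ ¬ Nat.Coprime (classSize a.1) (classSize b.1)
  symm := ⟨fun a b hab => ⟨hab.1.symm, fun hco => hab.2 hco.symm⟩⟩
  loopless := ⟨fun a ha => ha.1 rfl⟩

/-! Coprimality of `|x^G|` and `|y^G|` gives `G = C_G(x) C_G(y)`. Hence `x^G y^G ⊆ (xy)^G`, every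
conjugate of `x` commutes with `y`, and `|x^G| ≤ |(xy)^G|`, which divides `|x^G| |y^G|`. Since
`d(x^G, y^G) ≥ 3`, the class of `xy` is coprime to `x^G` or to `y^G`; either way this forces
`|(xy)^G| = |x^G|`, so `x^G y^G = x^G y`. Thus `x^G` is stable under right multiplication by
`w = z y⁻¹`, whence `o(w)` divides `|x^G|`, and `w = (x^g)⁻¹ u` with `u ∈ x^G` commutes with `y`.
Finally `w ≠ 1` is a product of the commuting `p`-elements `z` and `y⁻¹`. -/

theorem Commute.exists_orderOf_mul_eq_prime_pow {M : Type*} [Monoid M] {a b : M} {p m n : ℕ}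
    (hp : p.Prime) (hab : Commute a b) (ha : orderOf a = p ^ m) (hb : orderOf b = p ^ n) :
    ∃ k, orderOf (a * b) = p ^ k := by
  have hdvd := hab.orderOf_mul_dvd_mul_orderOf
  rw [ha, hb, ← pow_add] at hdvd
  obtain ⟨k, -, hk⟩ := (Nat.dvd_prime_pow hp).1 hdvd
  exact ⟨k, hk⟩

/-- A set stable under right multiplication by `w` is a union of left cosets of `⟨w⟩`. -/
theorem orderOf_dvd_natCard_of_mul_mem {G : Type*} [Group G] [Finite G] {X : Set G} {w : G}
    (hX : ∀ v ∈ X, v * w ∈ X) : orderOf w ∣ Nat.card X := by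
  have hpow : ∀ v ∈ X, ∀ n : ℕ, v * w ^ n ∈ X := by
    intro v hv n
    induction n with
    | zero => simpa using hv
    | succ k ih => simpa only [pow_succ, ← mul_assoc] using hX _ ih
  have hsat : QuotientGroup.mk ⁻¹' (QuotientGroup.mk '' X : Set (G ⧸ Subgroup.zpowers w)) = X := by
    refine Set.Subset.antisymm ?_ (Set.subset_preimage_image _ _)
    rintro v' ⟨v, hv, hvv'⟩
    rw [QuotientGroup.eq, ← mem_powers_iff_mem_zpowers] at hvv'
    obtain ⟨n, hn⟩ := hvv'
    simpa only [hn, mul_inv_cancel_left] using hpow v hv n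
  rw [← hsat, Nat.card_congr (QuotientGroup.preimageMkEquivSubgroupProdSet _ _), Nat.card_prod,
    Nat.card_zpowers]
  exact dvd_mul_right _ _

namespace Subgroup

variable {G : Type*} [Group G]

theorem index_inf_eq_mul_of_coprime {H K : Subgroup G} (h : H.index.Coprime K.index) :
    (H ⊓ K).index = H.index * K.index := by
  rcases Nat.eq_zero_or_pos (H ⊓ K).index with h0 | hpos
  · have : H.index = 0 ∨ K.index = 0 := by
      by_contra! hne
      exact index_inf_ne_zero hne.1 hne.2 h0
    rw [h0, Nat.mul_eq_zero.2 this]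
  · exact le_antisymm index_inf_le <| Nat.le_of_dvd hpos <|
      h.mul_dvd_of_dvd_of_dvd (index_dvd_of_le inf_le_left) (index_dvd_of_le inf_le_right)

/-- A subgroup `H` is transitive on `G ⧸ K` as soon as `[H : H ∩ K] = [G : K]`, which the
coprimality of the indices forces. -/
theorem mul_eq_univ_of_coprime_index [Finite G] {H K : Subgroup G}
    (h : H.index.Coprime K.index) : (H : Set G) * (K : Set G) = Set.univ := by
  have hrel : K.relIndex H = K.index := by
    refine Nat.eq_of_mul_eq_mul_right (Nat.pos_of_ne_zero H.index_ne_zero_of_finite) ?_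
    rw [← inf_relIndex_left, relIndex_mul_index inf_le_left, index_inf_eq_mul_of_coprime h,
      mul_comm]
  let f := quotientSubgroupOfEmbeddingOfLE K (le_top : H ≤ ⊤)
  have hf : Function.Surjective f := by
    refine ((Nat.bijective_iff_injective_and_card f).2 ⟨f.injective, ?_⟩).2
    change K.relIndex H = K.relIndex ⊤
    rw [hrel, relIndex_top_right]
  refine Set.eq_univ_of_forall fun g => ?_
  obtain ⟨q, hq⟩ := hf (QuotientGroup.mk ⟨g, mem_top g⟩)
  induction q using QuotientGroup.induction_on with | H a =>
  rw [quotientSubgroupOfEmbeddingOfLE_apply_mk, QuotientGroup.eq] at hq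
  exact Set.mem_mul.2 ⟨a, a.2, _, hq, mul_inv_cancel_left _ _⟩

end Subgroup

section ClassSize

variable {G : Type*} [Group G] {x y : G}

theorem classSize_eq_index (x : G) : classSize x = (Subgroup.centralizer {x}).index := by
  have horbit : classSet x = MulAction.orbit (ConjAct G) x :=
    Set.ext fun u => by rw [ConjAct.mem_orbit_conjAct, isConj_comm]; rfl
  rw [Subgroup.centralizer_eq_comap_stabilizer]
  refine Eq.trans ?_ (Subgroup.index_comap_of_surjective _ (MulEquiv.surjective _)).symm
  rw [MulAction.index_stabilizer, ← horbit, classSize, Nat.card_coe_set_eq]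

theorem classSize_pos [Finite G] (x : G) : 0 < classSize x := by
  rw [classSize_eq_index]
  exact Nat.pos_of_ne_zero Subgroup.index_ne_zero_of_finite

theorem classSize_eq_one_iff {z : G} : classSize z = 1 ↔ z ∈ Subgroup.center G := by
  rw [classSize_eq_index, Subgroup.index_eq_one, Subgroup.centralizer_eq_top_iff_subset,
    Set.singleton_subset_iff, SetLike.mem_coe]

theorem ncard_image_mul_right_classSet : ((· * y) '' classSet x).ncard = classSize x := by
  rw [Set.ncard_image_of_injective _ (mul_left_injective y), classSize, Nat.card_coe_set_eq]

theorem classSize_mul_dvd_of_coprime (hco : (classSize x).Coprime (classSize y)) :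
    classSize (x * y) ∣ classSize x * classSize y := by
  rw [classSize_eq_index, classSize_eq_index] at hco ⊢
  rw [classSize_eq_index, ← Subgroup.index_inf_eq_mul_of_coprime hco]
  refine Subgroup.index_dvd_of_le fun c hc => Subgroup.mem_centralizer_singleton_iff.2 ?_
  have hcx : Commute c x := Subgroup.mem_centralizer_singleton_iff.1 hc.1
  have hcy : Commute c y := Subgroup.mem_centralizer_singleton_iff.1 hc.2
  exact hcx.mul_right hcy

section Finite

variable [Finite G]

theorem exists_mem_centralizer_conj_eq_of_coprime (hco : (classSize x).Coprime (classSize y))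
    {v : G} (hv : IsConj y v) : ∃ a ∈ Subgroup.centralizer {x}, a * y * a⁻¹ = v := by
  obtain ⟨c, rfl⟩ := isConj_iff.1 hv
  rw [classSize_eq_index, classSize_eq_index] at hco
  have hc : c ∈ (Subgroup.centralizer {x} : Set G) * Subgroup.centralizer {y} := by
    rw [Subgroup.mul_eq_univ_of_coprime_index hco]; trivial
  obtain ⟨a, ha, b, hb, rfl⟩ := hc
  refine ⟨a, ha, ?_⟩
  rw [mul_assoc a b, Subgroup.mem_centralizer_singleton_iff.1 hb]
  group

theorem IsConj.mul_of_coprime_classSize (hco : (classSize x).Coprime (classSize y)) {u v : G}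
    (hu : IsConj x u) (hv : IsConj y v) : IsConj (x * y) (u * v) := by
  obtain ⟨h, rfl⟩ := isConj_iff.1 hu
  have hv' : IsConj y (h⁻¹ * v * h) := hv.trans (isConj_iff.2 ⟨h⁻¹, by group⟩)
  obtain ⟨a, ha, hav⟩ := exists_mem_centralizer_conj_eq_of_coprime hco hv'
  refine isConj_iff.2 ⟨h * a, ?_⟩
  calc h * a * (x * y) * (h * a)⁻¹ = h * (a * x) * y * a⁻¹ * h⁻¹ := by group
    _ = h * x * h⁻¹ * (h * (a * y * a⁻¹) * h⁻¹) := by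
      rw [Subgroup.mem_centralizer_singleton_iff.1 ha]; group
    _ = h * x * h⁻¹ * v := by rw [hav]; group

theorem Commute.of_isConj_left_of_coprime_classSize (hco : (classSize x).Coprime (classSize y))
    (hxy : Commute x y) {u : G} (hu : IsConj x u) : Commute u y := by
  obtain ⟨b, hb, rfl⟩ := exists_mem_centralizer_conj_eq_of_coprime hco.symm hu
  have hby : b * y * b⁻¹ = y := by
    rw [Subgroup.mem_centralizer_singleton_iff.1 hb, mul_inv_cancel_right]
  simpa [hby] using hxy.map (MulAut.conj b)

theorem image_mul_right_classSet_subset (hco : (classSize x).Coprime (classSize y)) :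
    (· * y) '' classSet x ⊆ classSet (x * y) := by
  rintro _ ⟨u, hu, rfl⟩
  exact IsConj.mul_of_coprime_classSize hco hu (IsConj.refl y)

theorem classSize_le_classSize_mul_of_coprime (hco : (classSize x).Coprime (classSize y)) :
    classSize x ≤ classSize (x * y) := by
  rw [← ncard_image_mul_right_classSet, classSize, Nat.card_coe_set_eq]
  exact Set.ncard_le_ncard (image_mul_right_classSet_subset hco) (Set.toFinite _)

/-- When `|(xy)^G| = |x^G|`, the inclusion `x^G y ⊆ (xy)^G` is an equality. -/
theorem IsConj.mul_mul_inv_of_classSize_mul_eq (hco : (classSize x).Coprime (classSize y))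
    (hxy : classSize (x * y) = classSize x) {u v : G} (hu : IsConj x u) (hv : IsConj y v) :
    IsConj x (u * v * y⁻¹) := by
  have himage : (· * y) '' classSet x = classSet (x * y) :=
    Set.eq_of_subset_of_ncard_le (image_mul_right_classSet_subset hco)
      (by rw [ncard_image_mul_right_classSet, ← hxy, classSize, Nat.card_coe_set_eq])
      (Set.toFinite _)
  obtain ⟨u', hu', hu'y⟩ : u * v ∈ (· * y) '' classSet x :=
    himage ▸ IsConj.mul_of_coprime_classSize hco hu hv
  rw [← hu'y, mul_inv_cancel_right]
  exact hu'

end Finite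

end ClassSize

theorem classSize_mul_eq_of_forall_not_adj {G : Type*} [Group G] [Finite G] {N : Subgroup G}
    {x y : G} (hx : x ∈ N ∧ x ∉ Subgroup.center G) (hy : y ∈ N ∧ y ∉ Subgroup.center G)
    (hco : (classSize x).Coprime (classSize y))
    (hnbr : ∀ w, ¬ ((classGraph G N).Adj ⟨x, hx⟩ w ∧ (classGraph G N).Adj w ⟨y, hy⟩))
    (hsize : classSize y < classSize x) : classSize (x * y) = classSize x := by
  have hle := classSize_le_classSize_mul_of_coprime hco
  have hdvd := classSize_mul_dvd_of_coprime hco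
  have hypos := classSize_pos y
  have hxy : x * y ∈ N ∧ x * y ∉ Subgroup.center G := by
    refine ⟨N.mul_mem hx.1 hy.1, fun hc => ?_⟩
    rw [← classSize_eq_one_iff] at hc
    omega
  have hxy_ne_x : x * y ≠ x := mul_ne_left.2 fun h => hy.2 (h ▸ Subgroup.one_mem _)
  have hxy_ne_y : x * y ≠ y := mul_ne_right.2 fun h => hx.2 (h ▸ Subgroup.one_mem _)
  have hcop : (classSize x).Coprime (classSize (x * y)) ∨
      (classSize (x * y)).Coprime (classSize y) := by
    by_contra! h
    exact hnbr ⟨x * y, hxy⟩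
      ⟨⟨fun he => hxy_ne_x (congrArg Subtype.val he).symm, h.1⟩,
        ⟨fun he => hxy_ne_y (congrArg Subtype.val he), h.2⟩⟩
  rcases hcop with hcx | hcy
  · have := Nat.le_of_dvd hypos (hcx.symm.dvd_of_dvd_mul_left hdvd)
    omega
  · exact le_antisymm (Nat.le_of_dvd (classSize_pos x) (hcy.dvd_of_dvd_mul_right hdvd)) hle

theorem stmt19_general {G : Type*} [Group G] [Finite G] (N : Subgroup G)
    (p : ℕ) (hp : p.Prime) (x y : G)
    (hx : x ∈ N ∧ x ∉ Subgroup.center G) (hy : y ∈ N ∧ y ∉ Subgroup.center G)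
    (hco : Nat.Coprime (classSize x) (classSize y))
    -- `d(x^G, y^G) ≥ 3` in `Γ_G(N)`: not adjacent and no common neighbour
    (hdist : ¬ (classGraph G N).Adj ⟨x, hx⟩ ⟨y, hy⟩ ∧
      ∀ w, ¬ ((classGraph G N).Adj ⟨x, hx⟩ w ∧ (classGraph G N).Adj w ⟨y, hy⟩))
    (hsize : classSize y < classSize x)
    (hcomm : Commute x y)
    (hyp : ∃ b : ℕ, orderOf y = p ^ b)
    (g z : G) (hz : z = g * y * g⁻¹) (hzy : z ≠ y) :
    z * y⁻¹ ≠ 1 ∧ (∃ n : ℕ, orderOf (z * y⁻¹) = p ^ n) ∧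
    Commute (z * y⁻¹) y ∧ p ∣ classSize x := by
  obtain ⟨b, hb⟩ := hyp
  have hxy := classSize_mul_eq_of_forall_not_adj hx hy hco hdist.2 hsize
  have hyz : IsConj y z := isConj_iff.2 ⟨g, hz.symm⟩
  have hstable : ∀ v ∈ classSet x, v * (z * y⁻¹) ∈ classSet x := fun v hv => by
    rw [← mul_assoc]
    exact hv.mul_mul_inv_of_classSize_mul_eq hco hxy hyz
  have hwy : Commute (z * y⁻¹) y := by
    have hxg : IsConj x (g * x * g⁻¹) := isConj_iff.2 ⟨g, rfl⟩
    have hw : z * y⁻¹ = (g * x * g⁻¹)⁻¹ * (g * x * g⁻¹ * z * y⁻¹) := by group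
    rw [hw]
    exact (hcomm.of_isConj_left_of_coprime_classSize hco hxg).inv_left.mul_left
      (hcomm.of_isConj_left_of_coprime_classSize hco
        (hxg.mul_mul_inv_of_classSize_mul_eq hco hxy hyz))
  have hw1 : z * y⁻¹ ≠ 1 := mul_inv_eq_one.not.2 hzy
  have hzord : orderOf z = p ^ b := by rw [hz, ← hb]; exact (MulAut.conj g).orderOf_eq y
  have hzy_comm : Commute z y := by simpa using hwy.mul_left (Commute.refl y)
  obtain ⟨n, hn⟩ := hzy_comm.inv_right.exists_orderOf_mul_eq_prime_pow hp hzord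
    (by rw [orderOf_inv, hb])
  have hn0 : n ≠ 0 := by
    rintro rfl
    exact hw1 (orderOf_eq_one_iff.1 hn)
  exact ⟨hw1, ⟨n, hn⟩, hwy,
    (dvd_pow_self p hn0).trans (hn ▸ orderOf_dvd_natCard_of_mul_mem hstable)⟩

theorem stmt19 {G : Type*} [Group G] [Finite G] (N : Subgroup G) (hN : N.Normal)
    (p : ℕ) (hp : p.Prime) (x y : G)
    (hx : x ∈ N ∧ x ∉ Subgroup.center G) (hy : y ∈ N ∧ y ∉ Subgroup.center G)
    (hco : Nat.Coprime (classSize x) (classSize y))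
    -- `d(x^G, y^G) ≥ 3` in `Γ_G(N)`: not adjacent and no common neighbour
    (hdist : ¬ (classGraph G N).Adj ⟨x, hx⟩ ⟨y, hy⟩ ∧
      ∀ w, ¬ ((classGraph G N).Adj ⟨x, hx⟩ w ∧ (classGraph G N).Adj w ⟨y, hy⟩))
    (hsize : classSize y < classSize x)
    (hcomm : Commute x y)
    (hxp : ∃ a : ℕ, orderOf x = p ^ a) (hyp : ∃ b : ℕ, orderOf y = p ^ b)
    (g z : G) (hz : z = g * y * g⁻¹) (hzy : z ≠ y) :
    z * y⁻¹ ≠ 1 ∧ (∃ n : ℕ, orderOf (z * y⁻¹) = p ^ n) ∧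
    Commute (z * y⁻¹) y ∧ p ∣ classSize x :=
  stmt19_general N p hp x y hx hy hco hdist hsize hcomm hyp g z hz hzy
end
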